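/- Let f be a discrete Morse-Bott function on a finite abstract simplicial complex K and let C^red be a reduced collection for f. Then the reduced boundary operator over ℤ/2 satisfies ∂^{C^red}_{k−1} ∘ ∂^{C^red}_k = 0 for all k. -/

import Mathlib

/-!
Over `ℤ/2`, `∂ ∘ ∂ = 0` on a set of cells `S` says that for `ν ⊂ τ` in `S` of codimension two
the number of cells of `S` strictly between them is even. In a simplex there are exactly two such
cells (the diamond property), so it suffices that `C^red` contains every cell `σ` with
`ν < σ < τ` for `ν, τ ∈ C^red`. Noncriticality of `ν` and `τ` squeezes `f σ` to the common
value of `C`, so `σ ∈ C` by maximality of `C`. If `σ` were noncritical through some `w ∉ C`,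
the other cell of the diamond through `ν` (or `τ`) and `w` would give `w` a second facet
(cofacet) of the same kind, against the Morse–Bott condition at the collection of `w`.
-/

open Finset

noncomputable section
open scoped Classical

/-- `σ` is a facet of `τ`: `σ ⊆ τ` and `dim σ = dim τ − 1`. -/
def Facet (σ τ : Finset ℕ) : Prop := σ ⊆ τ ∧ σ.card + 1 = τ.card

/-- A finite abstract simplicial complex: a finite family of nonempty finite sets
closed under taking nonempty subsets. -/
def IsComplex (K : Finset (Finset ℕ)) : Prop :=
  (∀ σ ∈ K, σ.Nonempty) ∧ ∀ σ ∈ K, ∀ ν, ν ⊆ σ → ν.Nonempty → ν ∈ K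

/-- The closure of a set of cells: all nonempty subsets of its cells. -/
def closureOf (S : Finset (Finset ℕ)) : Finset (Finset ℕ) :=
  S.biUnion fun σ => σ.powerset.filter fun ν => ν ≠ ∅

/-- The graph on `C` joining two cells whenever their closures intersect is connected. -/
def ConnectedOn (C : Finset (Finset ℕ)) : Prop :=
  ∀ a ∈ C, ∀ b ∈ C,
    Relation.ReflTransGen
      (fun x y => x ∈ C ∧ y ∈ C ∧ (closureOf {x} ∩ closureOf {y}).Nonempty) a b

/-- A nonempty set of cells of `K`, all with the same `f`-value, whose
closure-intersection graph is connected. -/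
def IsPreCollection (K : Finset (Finset ℕ)) (f : Finset ℕ → ℝ) (C : Finset (Finset ℕ)) :
    Prop :=
  C ⊆ K ∧ C.Nonempty ∧ (∀ σ ∈ C, ∀ τ ∈ C, f σ = f τ) ∧ ConnectedOn C

/-- A collection for `f`: a maximal constant-value connected set of cells. -/
def IsCollection (K : Finset (Finset ℕ)) (f : Finset ℕ → ℝ) (C : Finset (Finset ℕ)) :
    Prop :=
  IsPreCollection K f C ∧ ∀ C', IsPreCollection K f C' → C ⊆ C' → C' = C

/-- `#{τ ∉ C : σ < τ, f(τ) < f(σ)}`. -/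
def UpCount (K : Finset (Finset ℕ)) (f : Finset ℕ → ℝ) (C : Finset (Finset ℕ))
    (σ : Finset ℕ) : ℕ :=
  (K.filter fun τ => τ ∉ C ∧ Facet σ τ ∧ f τ < f σ).card

/-- `#{ν ∉ C : ν < σ, f(ν) > f(σ)}`. -/
def DownCount (K : Finset (Finset ℕ)) (f : Finset ℕ → ℝ) (C : Finset (Finset ℕ))
    (σ : Finset ℕ) : ℕ :=
  (K.filter fun ν => ν ∉ C ∧ Facet ν σ ∧ f σ < f ν).card

/-- A discrete Morse-Bott function on `K`. -/
def IsMorseBott (K : Finset (Finset ℕ)) (f : Finset ℕ → ℝ) : Prop :=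
  ∀ C, IsCollection K f C → ∀ σ ∈ C, UpCount K f C σ ≤ 1 ∧ DownCount K f C σ ≤ 1

/-- `σ` is upward noncritical w.r.t. `C`. -/
def UpNoncrit (K : Finset (Finset ℕ)) (f : Finset ℕ → ℝ) (C : Finset (Finset ℕ))
    (σ : Finset ℕ) : Prop :=
  ∃ w ∈ K, w ∉ C ∧ Facet σ w ∧ f w < f σ

/-- `σ` is downward noncritical w.r.t. `C`. -/
def DownNoncrit (K : Finset (Finset ℕ)) (f : Finset ℕ → ℝ) (C : Finset (Finset ℕ))
    (σ : Finset ℕ) : Prop :=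
  ∃ w ∈ K, w ∉ C ∧ Facet w σ ∧ f σ < f w

/-- The reduced collection `C^red`: the cells of `C` that are neither upward nor
downward noncritical w.r.t. `C`. -/
def reducedOf (K : Finset (Finset ℕ)) (f : Finset ℕ → ℝ) (C : Finset (Finset ℕ)) :
    Finset (Finset ℕ) :=
  C.filter fun σ => ¬ UpNoncrit K f C σ ∧ ¬ DownNoncrit K f C σ

/-- A noncritical pair: a two-element set `{σ, τ}` with `σ < τ` and `f σ ≥ f τ`. -/
def IsNoncritPair (f : Finset ℕ → ℝ) (S : Finset (Finset ℕ)) : Prop :=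
  ∃ σ τ, Facet σ τ ∧ f τ ≤ f σ ∧ S = {σ, τ}

/-- A discrete Morse function in Forman's sense. -/
def IsDiscreteMorse (K : Finset (Finset ℕ)) (g : Finset ℕ → ℝ) : Prop :=
  ∀ σ ∈ K, (K.filter fun τ => Facet σ τ ∧ g τ ≤ g σ).card ≤ 1 ∧
    (K.filter fun ν => Facet ν σ ∧ g σ ≤ g ν).card ≤ 1

/-- A critical cell of `g`. -/
def IsCritical (K : Finset (Finset ℕ)) (g : Finset ℕ → ℝ) (σ : Finset ℕ) : Prop :=
  σ ∈ K ∧ (K.filter fun τ => Facet σ τ ∧ g τ ≤ g σ).card = 0 ∧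
    (K.filter fun ν => Facet ν σ ∧ g σ ≤ g ν).card = 0

/-- The `k`-dimensional cells of `S`. -/
def cells (S : Finset (Finset ℕ)) (k : ℕ) : Finset (Finset ℕ) :=
  S.filter fun σ => σ.card = k + 1

/-- The `ℤ/2`-vector space with basis the `k`-dimensional cells of `S`. -/
abbrev Chain (S : Finset (Finset ℕ)) (k : ℕ) : Type :=
  ↥(cells S k) → ZMod 2

/-- The boundary operator `C_k(S) → C_j(S)` (used with `j = k − 1`), sending each
`k`-cell of `S` to the sum of those of its facets that lie in `S`. -/
def bdry (S : Finset (Finset ℕ)) (j k : ℕ) : Chain S k →ₗ[ZMod 2] Chain S j :=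
  Matrix.mulVecLin (Matrix.of fun (ν : ↥(cells S j)) (τ : ↥(cells S k)) =>
    if Facet ν.1 τ.1 then (1 : ZMod 2) else 0)

/-- `b_k(S) = dim (ker ∂_k / im ∂_{k+1})`, the `k`-th mod-2 Betti number of the
boundary complex of `S`. -/
def bettiOf (S : Finset (Finset ℕ)) (k : ℕ) : ℕ :=
  Module.finrank (ZMod 2)
    (↥(LinearMap.ker (bdry S (k - 1) k)) ⧸
      Submodule.comap (LinearMap.ker (bdry S (k - 1) k)).subtype
        (LinearMap.range (bdry S k (k + 1))))

/-- The Poincaré polynomial `P_t(S) = Σ_k b_k(S) t^k`. -/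
def PtOf (S : Finset (Finset ℕ)) : Polynomial ℕ :=
  ∑ k ∈ Finset.range (S.sup Finset.card), Polynomial.C (bettiOf S k) * Polynomial.X ^ k

/-- `dim H_k(N, E; ℤ/2)`: the homology of the quotient chain complex
`C_*(N)/C_*(E)`, computed via the relative chain complex with basis the cells of
`N \ E` (the image of the basis of `C_k(N)` in the quotient) and the induced
boundary. -/
def relBetti (N E : Finset (Finset ℕ)) (k : ℕ) : ℕ := bettiOf (N \ E) k

/-- The relative Poincaré polynomial `Σ_k dim H_k(N, E; ℤ/2) t^k`. -/
def relPt (N E : Finset (Finset ℕ)) : Polynomial ℕ := PtOf (N \ E)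

/-- The Euler characteristic `Σ_k (−1)^k dim H_k(S; ℤ/2)`. -/
def eulerOf (S : Finset (Finset ℕ)) : ℤ :=
  ∑ k ∈ Finset.range (S.sup Finset.card), (-1 : ℤ) ^ k * bettiOf S k

/-- The relative Euler characteristic `χ(N, E) = Σ_k (−1)^k dim H_k(N, E; ℤ/2)`. -/
def relEuler (N E : Finset (Finset ℕ)) : ℤ :=
  ∑ k ∈ Finset.range ((N \ E).sup Finset.card), (-1 : ℤ) ^ k * relBetti N E k

lemma Facet.card_lt {σ τ : Finset ℕ} (h : Facet σ τ) : σ.card < τ.card := by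
  have := h.2; omega

lemma Facet.nonempty {σ τ : Finset ℕ} (h : Facet σ τ) : τ.Nonempty :=
  Finset.card_pos.mp (by have := h.2; omega)

lemma facet_facet_iff_mem_Icc_sdiff {ν σ τ ρ : Finset ℕ} (hνσ : Facet ν σ) (hστ : Facet σ τ) :
    Facet ν ρ ∧ Facet ρ τ ↔ ρ ∈ Icc ν τ \ {ν, τ} := by
  have hcard : ν.card + 2 = τ.card := by have := hνσ.2; have := hστ.2; omega
  simp only [Finset.mem_sdiff, Finset.mem_Icc, Finset.mem_insert, Finset.mem_singleton, not_or]
  constructor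
  · rintro ⟨hνρ, hρτ⟩
    exact ⟨⟨hνρ.1, hρτ.1⟩, fun h => by have := hνρ.2; simp_all,
      fun h => by have := hρτ.2; simp_all⟩
  · rintro ⟨⟨hνρ, hρτ⟩, hne₁, hne₂⟩
    have h₁ := Finset.card_lt_card (hνρ.ssubset_of_ne (Ne.symm hne₁))
    have h₂ := Finset.card_lt_card (hρτ.ssubset_of_ne hne₂)
    exact ⟨⟨hνρ, by omega⟩, ⟨hρτ, by omega⟩⟩

lemma card_filter_facet_facet {ν σ τ : Finset ℕ} (hνσ : Facet ν σ) (hστ : Facet σ τ) :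
    ((Icc ν τ).filter fun ρ => Facet ν ρ ∧ Facet ρ τ).card = 2 := by
  have hντ : ν ⊆ τ := hνσ.1.trans hστ.1
  have hne : ν ≠ τ := (hνσ.card_lt.trans hστ.card_lt).ne ∘ congrArg Finset.card
  rw [Finset.filter_congr fun ρ _ => facet_facet_iff_mem_Icc_sdiff hνσ hστ,
    Finset.filter_mem_eq_inter, Finset.inter_eq_right.mpr Finset.sdiff_subset,
    Finset.card_sdiff_of_subset (by simp [Finset.insert_subset_iff, hντ]),
    Finset.card_Icc_finset hντ, Finset.card_pair hne]
  have := hνσ.2; have := hστ.2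
  rw [show τ.card - ν.card = 2 by omega]; rfl

lemma exists_ne_facet_facet {ν σ τ : Finset ℕ} (hνσ : Facet ν σ) (hστ : Facet σ τ) :
    ∃ σ', σ' ≠ σ ∧ Facet ν σ' ∧ Facet σ' τ := by
  obtain ⟨σ', hσ', hne⟩ :=
    Finset.exists_mem_ne (by rw [card_filter_facet_facet hνσ hστ]; norm_num) σ
  exact ⟨σ', hne, (Finset.mem_filter.mp hσ').2⟩

theorem bdry_comp_bdry_eq_zero {S : Finset (Finset ℕ)}
    (hS : ∀ ν ∈ S, ∀ τ ∈ S, ∀ σ, Facet ν σ → Facet σ τ → σ ∈ S) (k : ℕ) :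
    (bdry S (k - 1) k).comp (bdry S k (k + 1)) = 0 := by
  show (Matrix.mulVecLin _).comp (Matrix.mulVecLin _) = 0
  rw [← Matrix.mulVecLin_mul, ← Matrix.mulVecLin_zero]
  congr 1
  ext ⟨ν, hν⟩ ⟨τ, hτ⟩
  simp only [Matrix.mul_apply, Matrix.of_apply, Matrix.zero_apply, ite_zero_mul_ite_zero,
    mul_one]
  rw [Finset.sum_coe_sort (cells S k) (fun σ => if Facet ν σ ∧ Facet σ τ then 1 else 0),
    Finset.sum_boole]
  rcases Finset.eq_empty_or_nonempty
    ((cells S k).filter fun σ => Facet ν σ ∧ Facet σ τ) with hT | ⟨σ₀, hσ₀⟩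
  · simp [hT]
  simp only [cells, Finset.mem_filter] at hν hτ hσ₀
  obtain ⟨⟨-, hσ₀card⟩, hνσ₀, hσ₀τ⟩ := hσ₀
  suffices (cells S k).filter (fun σ => Facet ν σ ∧ Facet σ τ) =
      (Icc ν τ).filter fun σ => Facet ν σ ∧ Facet σ τ by
    rw [this, card_filter_facet_facet hνσ₀ hσ₀τ]; rfl
  ext σ
  simp only [cells, Finset.mem_filter, Finset.mem_Icc]
  constructor
  · rintro ⟨-, hνσ, hστ⟩
    exact ⟨⟨hνσ.1, hστ.1⟩, hνσ, hστ⟩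
  · rintro ⟨-, hνσ, hστ⟩
    exact ⟨⟨hS ν hν.1 τ hτ.1 σ hνσ hστ, by have := hνσ.2; have := hνσ₀.2; omega⟩, hνσ, hστ⟩

section MorseBott

variable {K : Finset (Finset ℕ)} {f : Finset ℕ → ℝ} {C : Finset (Finset ℕ)}

lemma mem_closureOf_singleton {ν σ : Finset ℕ} : ν ∈ closureOf {σ} ↔ ν ⊆ σ ∧ ν ≠ ∅ := by
  simp [closureOf]

lemma ConnectedOn.insert_of_inter_nonempty {σ ν : Finset ℕ} (hC : ConnectedOn C) (hν : ν ∈ C)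
    (hσν : (closureOf {σ} ∩ closureOf {ν}).Nonempty) : ConnectedOn (insert σ C) := by
  set R := fun x y => x ∈ insert σ C ∧ y ∈ insert σ C ∧
    (closureOf {x} ∩ closureOf {y}).Nonempty
  have hpath : ∀ x ∈ C, ∀ y ∈ C, Relation.ReflTransGen R x y := fun x hx y hy =>
    Relation.ReflTransGen.mono (fun a b ⟨ha, hb, hab⟩ =>
      ⟨Finset.mem_insert_of_mem ha, Finset.mem_insert_of_mem hb, hab⟩) x y (hC x hx y hy)
  have hσν' : R σ ν := ⟨Finset.mem_insert_self σ C, Finset.mem_insert_of_mem hν, hσν⟩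
  have hνσ' : R ν σ :=
    ⟨Finset.mem_insert_of_mem hν, Finset.mem_insert_self σ C, by rwa [Finset.inter_comm]⟩
  intro a ha b hb
  rcases Finset.mem_insert.mp ha with rfl | haC <;> rcases Finset.mem_insert.mp hb with rfl | hbC
  · exact .refl
  · exact .head hσν' (hpath ν hν b hbC)
  · exact (hpath a haC ν hν).tail hνσ'
  · exact hpath a haC b hbC

lemma IsCollection.mem_of_subset (hK : IsComplex K) (hC : IsCollection K f C) {ν σ : Finset ℕ}
    (hν : ν ∈ C) (hσ : σ ∈ K) (hνσ : ν ⊆ σ) (hfσ : f σ = f ν) : σ ∈ C := by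
  have hν₀ : ν ≠ ∅ := (hK.1 ν (hC.1.1 hν)).ne_empty
  have hpre : IsPreCollection K f (insert σ C) := by
    refine ⟨Finset.insert_subset hσ hC.1.1, Finset.insert_nonempty σ C, ?_,
      hC.1.2.2.2.insert_of_inter_nonempty hν ⟨ν, Finset.mem_inter.mpr
        ⟨mem_closureOf_singleton.mpr ⟨hνσ, hν₀⟩, mem_closureOf_singleton.mpr ⟨subset_rfl, hν₀⟩⟩⟩⟩
    have hval : ∀ x ∈ insert σ C, f x = f ν := fun x hx => by
      rcases Finset.mem_insert.mp hx with rfl | hx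
      · exact hfσ
      · exact hC.1.2.2.1 x hx ν hν
    exact fun x hx y hy => (hval x hx).trans (hval y hy).symm
  rw [← hC.2 _ hpre (Finset.subset_insert σ C)]
  exact Finset.mem_insert_self σ C

lemma exists_isCollection_mem {w : Finset ℕ} (hw : w ∈ K) : ∃ C, IsCollection K f C ∧ w ∈ C := by
  have hne : (K.powerset.filter fun C => IsPreCollection K f C ∧ w ∈ C).Nonempty := by
    refine ⟨{w}, Finset.mem_filter.mpr ⟨by simpa using hw, ⟨by simpa using hw,
      Finset.singleton_nonempty w, by simp, ?_⟩, Finset.mem_singleton_self w⟩⟩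
    intro a ha b hb
    rw [Finset.mem_singleton.mp ha, Finset.mem_singleton.mp hb]
  obtain ⟨C, hC, hmax⟩ := Finset.exists_max_image _ Finset.card hne
  obtain ⟨-, hCpre, hwC⟩ := Finset.mem_filter.mp hC
  refine ⟨C, ⟨hCpre, fun C' hC' hCC' => ?_⟩, hwC⟩
  exact (Finset.eq_of_subset_of_card_le hCC' <|
    hmax C' (Finset.mem_filter.mpr ⟨Finset.mem_powerset.mpr hC'.1, hC', hCC' hwC⟩)).symm

lemma IsMorseBott.eq_of_facet_of_lt (hf : IsMorseBott K f) {w σ σ' : Finset ℕ} (hw : w ∈ K)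
    (hσ : σ ∈ K) (hσ' : σ' ∈ K) (h : Facet σ w) (h' : Facet σ' w) (hlt : f w < f σ)
    (hlt' : f w < f σ') : σ = σ' := by
  obtain ⟨Cw, hCw, hwCw⟩ := exists_isCollection_mem (f := f) hw
  have hout : ∀ x, f w < f x → x ∉ Cw := fun x hx hxC => hx.ne (hCw.1.2.2.1 w hwCw x hxC)
  by_contra hne
  have := (hf Cw hCw w hwCw).2
  have : 1 < DownCount K f Cw w := Finset.one_lt_card.mpr
    ⟨σ, Finset.mem_filter.mpr ⟨hσ, hout σ hlt, h, hlt⟩,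
      σ', Finset.mem_filter.mpr ⟨hσ', hout σ' hlt', h', hlt'⟩, hne⟩
  omega

lemma IsMorseBott.eq_of_cofacet_of_lt (hf : IsMorseBott K f) {w τ τ' : Finset ℕ} (hw : w ∈ K)
    (hτ : τ ∈ K) (hτ' : τ' ∈ K) (h : Facet w τ) (h' : Facet w τ') (hlt : f τ < f w)
    (hlt' : f τ' < f w) : τ = τ' := by
  obtain ⟨Cw, hCw, hwCw⟩ := exists_isCollection_mem (f := f) hw
  have hout : ∀ x, f x < f w → x ∉ Cw := fun x hx hxC => hx.ne (hCw.1.2.2.1 x hxC w hwCw)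
  by_contra hne
  have := (hf Cw hCw w hwCw).1
  have : 1 < UpCount K f Cw w := Finset.one_lt_card.mpr
    ⟨τ, Finset.mem_filter.mpr ⟨hτ, hout τ hlt, h, hlt⟩,
      τ', Finset.mem_filter.mpr ⟨hτ', hout τ' hlt', h', hlt'⟩, hne⟩
  omega

lemma mem_reducedOf {σ : Finset ℕ} :
    σ ∈ reducedOf K f C ↔ σ ∈ C ∧ ¬ UpNoncrit K f C σ ∧ ¬ DownNoncrit K f C σ := by
  simp [reducedOf]

lemma IsPreCollection.le_of_facet_of_not_upNoncrit (hC : IsPreCollection K f C)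
    {ν σ : Finset ℕ} (hν : ν ∈ C) (hνU : ¬ UpNoncrit K f C ν) (hσ : σ ∈ K) (h : Facet ν σ) :
    f ν ≤ f σ := by
  by_cases hσC : σ ∈ C
  · exact (hC.2.2.1 ν hν σ hσC).le
  · exact not_lt.mp fun hlt => hνU ⟨σ, hσ, hσC, h, hlt⟩

lemma IsPreCollection.le_of_facet_of_not_downNoncrit (hC : IsPreCollection K f C)
    {σ τ : Finset ℕ} (hτ : τ ∈ C) (hτD : ¬ DownNoncrit K f C τ) (hσ : σ ∈ K) (h : Facet σ τ) :
    f σ ≤ f τ := by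
  by_cases hσC : σ ∈ C
  · exact (hC.2.2.1 σ hσC τ hτ).le
  · exact not_lt.mp fun hlt => hτD ⟨σ, hσ, hσC, h, hlt⟩

lemma IsCollection.mem_of_facet_facet (hK : IsComplex K) (hC : IsCollection K f C)
    {ν σ τ : Finset ℕ} (hν : ν ∈ reducedOf K f C) (hτ : τ ∈ reducedOf K f C) (hσ : σ ∈ K)
    (hνσ : Facet ν σ) (hστ : Facet σ τ) : σ ∈ C := by
  obtain ⟨hνC, hνU, -⟩ := mem_reducedOf.mp hν
  obtain ⟨hτC, -, hτD⟩ := mem_reducedOf.mp hτ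
  have h₁ := hC.1.le_of_facet_of_not_upNoncrit hνC hνU hσ hνσ
  have h₂ := hC.1.le_of_facet_of_not_downNoncrit hτC hτD hσ hστ
  have h₃ := hC.1.2.2.1 ν hνC τ hτC
  exact hC.mem_of_subset hK hνC hσ hνσ.1 (by linarith)

lemma not_upNoncrit_of_facet (hK : IsComplex K) (hf : IsMorseBott K f)
    (hC : IsPreCollection K f C) {ν σ : Finset ℕ} (hν : ν ∈ reducedOf K f C) (hσ : σ ∈ C)
    (hνσ : Facet ν σ) : ¬ UpNoncrit K f C σ := by
  rintro ⟨w, hw, -, hσw, hlt⟩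
  obtain ⟨hνC, hνU, -⟩ := mem_reducedOf.mp hν
  obtain ⟨σ', hne, hνσ', hσ'w⟩ := exists_ne_facet_facet hνσ hσw
  have hσ' : σ' ∈ K := hK.2 w hw σ' hσ'w.1 hνσ'.nonempty
  have h₁ := hC.le_of_facet_of_not_upNoncrit hνC hνU hσ' hνσ'
  have h₂ := hC.2.2.1 σ hσ ν hνC
  exact hne (hf.eq_of_facet_of_lt hw hσ' (hC.1 hσ) hσ'w hσw (by linarith) hlt)

lemma not_downNoncrit_of_facet (hK : IsComplex K) (hf : IsMorseBott K f)
    (hC : IsPreCollection K f C) {σ τ : Finset ℕ} (hτ : τ ∈ reducedOf K f C) (hσ : σ ∈ C)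
    (hστ : Facet σ τ) : ¬ DownNoncrit K f C σ := by
  rintro ⟨w, hw, -, hwσ, hlt⟩
  obtain ⟨hτC, -, hτD⟩ := mem_reducedOf.mp hτ
  obtain ⟨σ', hne, hwσ', hσ'τ⟩ := exists_ne_facet_facet hwσ hστ
  have hσ' : σ' ∈ K := hK.2 τ (hC.1 hτC) σ' hσ'τ.1 hwσ'.nonempty
  have h₁ := hC.le_of_facet_of_not_downNoncrit hτC hτD hσ' hσ'τ
  have h₂ := hC.2.2.1 σ hσ τ hτC
  exact hne (hf.eq_of_cofacet_of_lt hw hσ' (hC.1 hσ) hwσ' hwσ (by linarith) hlt)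

lemma mem_reducedOf_of_facet_facet (hK : IsComplex K) (hf : IsMorseBott K f)
    (hC : IsCollection K f C) {ν σ τ : Finset ℕ} (hν : ν ∈ reducedOf K f C)
    (hτ : τ ∈ reducedOf K f C) (hνσ : Facet ν σ) (hστ : Facet σ τ) :
    σ ∈ reducedOf K f C := by
  have hτK : τ ∈ K := hC.1.1 (mem_reducedOf.mp hτ).1
  have hσC := hC.mem_of_facet_facet hK hν hτ (hK.2 τ hτK σ hστ.1 hνσ.nonempty) hνσ hστ
  exact mem_reducedOf.mpr ⟨hσC, not_upNoncrit_of_facet hK hf hC.1 hν hσC hνσ,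
    not_downNoncrit_of_facet hK hf hC.1 hτ hσC hστ⟩

end MorseBott

/-- The reduced boundary operator of a reduced collection over `ℤ/2`
satisfies `∂_{k−1} ∘ ∂_k = 0` for all `k` (here in the form `∂_k ∘ ∂_{k+1} = 0`,
for all `k`, where `∂_k : C_k → C_{k−1}`). -/
theorem statement6 (K : Finset (Finset ℕ)) (hK : IsComplex K) (f : Finset ℕ → ℝ)
    (hf : IsMorseBott K f) (C : Finset (Finset ℕ)) (hC : IsCollection K f C) (k : ℕ) :
    (bdry (reducedOf K f C) (k - 1) k).comp (bdry (reducedOf K f C) k (k + 1)) = 0 :=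
  bdry_comp_bdry_eq_zero
    (fun _ hν _ hτ _ hνσ hστ => mem_reducedOf_of_facet_facet hK hf hC hν hτ hνσ hστ) k
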